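/- Let j, k be natural numbers with j + k even and j ≠ k. Then the unweighted L² inner product of the Chebyshev polynomials satisfies ∫_{-1}^{1} T_j(x) T_k(x) dx = 1/(1-(j+k)²) + 1/(1-(j-k)²). -/

import Mathlib

open Polynomial Polynomial.Chebyshev

open Real intervalIntegral in
private lemma cheb_sin_integral (c : ℝ) (hc : c + 1 ≠ 0) (hc' : c - 1 ≠ 0)
    (hodd : ∃ m : ℤ, c = 2 * m) :
    ∫ θ in (0:ℝ)..π, sin θ * cos (c * θ) = 2 / (1 - c ^ 2) := by
  have key : ∀ θ ∈ Set.uIcc (0:ℝ) π,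
      HasDerivAt (fun θ => -(cos ((c+1)*θ) / (2*(c+1))) + cos ((c-1)*θ) / (2*(c-1)))
        (sin θ * cos (c * θ)) θ := by
    intro θ _
    have h1 : HasDerivAt (fun θ : ℝ => cos ((c+1)*θ)) (-sin ((c+1)*θ) * (c+1)) θ := by
      simpa [Function.comp_def] using (Real.hasDerivAt_cos ((c+1)*θ)).comp θ
        ((hasDerivAt_id θ).const_mul (c+1))
    have h2 : HasDerivAt (fun θ : ℝ => cos ((c-1)*θ)) (-sin ((c-1)*θ) * (c-1)) θ := by
      simpa [Function.comp_def] using (Real.hasDerivAt_cos ((c-1)*θ)).comp θ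
        ((hasDerivAt_id θ).const_mul (c-1))
    have hF : HasDerivAt (fun θ => -(cos ((c+1)*θ) / (2*(c+1))) + cos ((c-1)*θ) / (2*(c-1)))
        (sin ((c+1)*θ) / 2 - sin ((c-1)*θ) / 2) θ := by
      have := ((h1.div_const (2*(c+1))).neg).add (h2.div_const (2*(c-1)))
      refine this.congr_deriv ?_
      field_simp
      ring
    have e1 : sin ((c+1)*θ) - sin ((c-1)*θ) = 2 * sin θ * cos (c * θ) := by
      rw [show (c+1)*θ = c*θ + θ by ring, show (c-1)*θ = c*θ - θ by ring,
        Real.sin_add, Real.sin_sub]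
      ring
    convert hF using 1
    linarith [e1]
  rw [integral_eq_sub_of_hasDerivAt key (by
    apply Continuous.intervalIntegrable
    exact continuous_sin.mul (continuous_cos.comp (continuous_const.mul continuous_id)))]
  obtain ⟨m, hm⟩ := hodd
  have hcp : cos ((c+1)*π) = -1 := by
    rw [show (c+1)*π = (m:ℝ) * (2*π) + π by rw [hm]; ring]
    exact_mod_cast Real.cos_int_mul_two_pi_add_pi m
  have hcm : cos ((c-1)*π) = -1 := by
    rw [show (c-1)*π = ((m-1:ℤ):ℝ) * (2*π) + π by push_cast; rw [hm]; ring]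
    exact_mod_cast Real.cos_int_mul_two_pi_add_pi (m-1)
  simp only [mul_zero, Real.cos_zero, hcp, hcm]
  have h1 : (1:ℝ) - c^2 ≠ 0 := by
    intro h
    rcases mul_eq_zero.1 (show (c-1)*(c+1) = 0 by linear_combination -h) with h' | h'
    exacts [hc' h', hc h']
  field_simp
  ring

theorem chebyshev_L2_inner_product (j k : ℕ) (hpar : Even (j + k)) (hne : j ≠ k) :
    ∫ x in (-1 : ℝ)..1, (T ℝ j).eval x * (T ℝ k).eval x =
      1 / (1 - ((j : ℝ) + k) ^ 2) + 1 / (1 - ((j : ℝ) - k) ^ 2) := by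
  have hjk : (j:ℝ) + k = ((j + k : ℕ) : ℝ) := by push_cast; ring
  have ha : ∃ m : ℤ, (j:ℝ) + k = 2 * m := by
    obtain ⟨r, hr⟩ := hpar
    refine ⟨r, ?_⟩
    have h' : ((j + k : ℕ) : ℝ) = ((r + r : ℕ) : ℝ) := by rw [hr]
    push_cast at h'
    push_cast
    linarith
  have hb : ∃ m : ℤ, (j:ℝ) - k = 2 * m := by
    obtain ⟨m, hm⟩ := ha
    refine ⟨(j:ℤ) - m, ?_⟩
    push_cast
    linarith
  have hodd : ∀ (c : ℝ), (∃ m : ℤ, c = 2 * m) → c + 1 ≠ 0 ∧ c - 1 ≠ 0 := by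
    rintro c ⟨m, rfl⟩
    constructor <;> intro h
    · have : (2*m + 1 : ℤ) = 0 := by exact_mod_cast h
      omega
    · have : (2*m - 1 : ℤ) = 0 := by exact_mod_cast h
      omega
  have sub : (∫ x in (-1 : ℝ)..1, (T ℝ j).eval x * (T ℝ k).eval x)
      = ∫ θ in (0:ℝ)..Real.pi, Real.sin θ *
          (Real.cos ((j:ℝ)*θ) * Real.cos ((k:ℝ)*θ)) := by
    have hsub := intervalIntegral.integral_comp_smul_deriv (a := (0:ℝ)) (b := Real.pi)
      (f := Real.cos) (f' := fun θ => -Real.sin θ)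
      (g := fun x => (T ℝ j).eval x * (T ℝ k).eval x)
      (fun θ _ => Real.hasDerivAt_cos θ)
      (Real.continuous_sin.neg.continuousOn)
      ((Polynomial.continuous _).mul (Polynomial.continuous _))
    rw [Real.cos_zero, Real.cos_pi, intervalIntegral.integral_symm (-1) 1] at hsub
    have h2 : (∫ x in (-1:ℝ)..1, (T ℝ j).eval x * (T ℝ k).eval x)
        = ∫ θ in (0:ℝ)..Real.pi, -((fun θ => -Real.sin θ) θ •
            ((fun x => (T ℝ j).eval x * (T ℝ k).eval x) ∘ Real.cos) θ) := by
      rw [intervalIntegral.integral_neg, hsub, neg_neg]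
    rw [h2]
    apply intervalIntegral.integral_congr
    intro θ _
    have hT : ∀ n : ℕ, (T ℝ n).eval (Real.cos θ) = Real.cos ((n:ℝ) * θ) := by
      intro n
      have := Polynomial.Chebyshev.T_real_cos θ (n : ℤ)
      push_cast at this
      exact this
    simp only [Function.comp, smul_eq_mul, hT]
    ring
  rw [sub]
  have prodsum : ∀ θ : ℝ, Real.sin θ * (Real.cos ((j:ℝ)*θ) * Real.cos ((k:ℝ)*θ))
      = (Real.sin θ * Real.cos (((j:ℝ)+k) * θ) + Real.sin θ * Real.cos (((j:ℝ)-k) * θ)) / 2 := by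
    intro θ
    rw [show ((j:ℝ)+k)*θ = (j:ℝ)*θ + (k:ℝ)*θ by ring,
        show ((j:ℝ)-k)*θ = (j:ℝ)*θ - (k:ℝ)*θ by ring,
        Real.cos_add, Real.cos_sub]
    ring
  simp only [prodsum]
  rw [intervalIntegral.integral_div]
  rw [intervalIntegral.integral_add (Continuous.intervalIntegrable (by fun_prop) _ _) (Continuous.intervalIntegrable (by fun_prop) _ _)]
  rw [cheb_sin_integral _ (hodd _ ha).1 (hodd _ ha).2 ha,
      cheb_sin_integral _ (hodd _ hb).1 (hodd _ hb).2 hb]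
  ring
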